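/- For 0 < d < 1, the improper integral G(d) = ∫_0^∞ d/√(cosh²u − d²) du converges, G is nondecreasing in d on (0,1), G(d) → 0 as d → 0⁺, and G(d) → +∞ as d → 1⁻. -/

import Mathlib

/-!
Since `cosh² u - d² ≥ (1 - d²) cosh² u` and `1 / cosh u ≤ 2 e^{-u}`, the integrand is at most
`2d e^{-u} / √(1 - d²)`; this gives convergence and `G d ≤ 2d / √(1 - d²) → 0` as `d → 0⁺`.
The integrand is pointwise nondecreasing in `d`, hence so is `G`. For the blow-up write
`ε = √(1 - d²)`: then `cosh² u - d² = sinh² u + ε² ≤ (sinh u + ε)²`, and on `[0, 1]` the integrand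
dominates `(d / cosh 1) · cosh u / (sinh u + ε)`, whose integral `(d / cosh 1) · log ((sinh 1 + ε) / ε)`
tends to `+∞` as `ε → 0⁺`.
-/

open MeasureTheory Set Real Filter Topology

noncomputable def G (d : ℝ) : ℝ :=
  ∫ u in Set.Ioi (0 : ℝ), d / Real.sqrt (Real.cosh u ^ 2 - d ^ 2)

lemma sq_lt_cosh_sq {d : ℝ} (hd : d ^ 2 < 1) (u : ℝ) : d ^ 2 < cosh u ^ 2 :=
  hd.trans_le (one_le_pow₀ (one_le_cosh u))

lemma sqrt_one_sub_sq_pos {d : ℝ} (hd0 : 0 ≤ d) (hd1 : d < 1) : 0 < √(1 - d ^ 2) :=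
  sqrt_pos.2 (by nlinarith)

lemma sqrt_one_sub_sq_mul_cosh_le {d : ℝ} (hd : d ^ 2 ≤ 1) (u : ℝ) :
    √(1 - d ^ 2) * cosh u ≤ √(cosh u ^ 2 - d ^ 2) := by
  calc √(1 - d ^ 2) * cosh u = √((1 - d ^ 2) * cosh u ^ 2) := by
        rw [sqrt_mul (by linarith), sqrt_sq (cosh_pos u).le]
    _ ≤ √(cosh u ^ 2 - d ^ 2) :=
        sqrt_le_sqrt (by nlinarith [one_le_pow₀ (n := 2) (one_le_cosh u), sq_nonneg d])

lemma sqrt_cosh_sq_sub_sq_le {d u : ℝ} (hd : d ^ 2 ≤ 1) (hu : 0 ≤ u) :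
    √(cosh u ^ 2 - d ^ 2) ≤ sinh u + √(1 - d ^ 2) := by
  have hsinh : 0 ≤ sinh u := sinh_nonneg_iff.2 hu
  have hε : √(1 - d ^ 2) ^ 2 = 1 - d ^ 2 := sq_sqrt (by linarith)
  rw [sqrt_le_iff, cosh_sq]
  exact ⟨by positivity, by nlinarith [sqrt_nonneg (1 - d ^ 2)]⟩

lemma inv_cosh_le_two_mul_exp_neg (u : ℝ) : (cosh u)⁻¹ ≤ 2 * exp (-u) :=
  calc (cosh u)⁻¹ ≤ (exp u / 2)⁻¹ :=
        inv_anti₀ (by positivity) (by rw [cosh_eq]; linarith [exp_pos (-u)])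
    _ = 2 * exp (-u) := by rw [inv_div, exp_neg, div_eq_mul_inv]

lemma div_sqrt_cosh_sq_sub_sq_le {d : ℝ} (hd0 : 0 ≤ d) (hd1 : d < 1) (u : ℝ) :
    d / √(cosh u ^ 2 - d ^ 2) ≤ 2 * d / √(1 - d ^ 2) * exp (-u) := by
  have hε := sqrt_one_sub_sq_pos hd0 hd1
  calc d / √(cosh u ^ 2 - d ^ 2) ≤ d / (√(1 - d ^ 2) * cosh u) :=
        div_le_div_of_nonneg_left hd0 (by positivity)
          (sqrt_one_sub_sq_mul_cosh_le (by nlinarith) u)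
    _ = d / √(1 - d ^ 2) * (cosh u)⁻¹ := by rw [← div_div, div_eq_mul_inv]
    _ ≤ d / √(1 - d ^ 2) * (2 * exp (-u)) := by gcongr; exact inv_cosh_le_two_mul_exp_neg u
    _ = 2 * d / √(1 - d ^ 2) * exp (-u) := by ring

lemma integrableOn_div_sqrt_cosh_sq_sub_sq {d : ℝ} (hd0 : 0 ≤ d) (hd1 : d < 1) :
    IntegrableOn (fun u : ℝ => d / √(cosh u ^ 2 - d ^ 2)) (Ioi 0) := by
  refine ((integrableOn_exp_neg_Ioi 0).const_mul (2 * d / √(1 - d ^ 2))).mono'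
    (Measurable.aestronglyMeasurable (by fun_prop)) ?_
  filter_upwards with u
  rw [norm_of_nonneg (by positivity)]
  exact div_sqrt_cosh_sq_sub_sq_le hd0 hd1 u

lemma G_nonneg {d : ℝ} (hd : 0 ≤ d) : 0 ≤ G d :=
  setIntegral_nonneg measurableSet_Ioi fun _ _ => by positivity

lemma G_le {d : ℝ} (hd0 : 0 ≤ d) (hd1 : d < 1) : G d ≤ 2 * d / √(1 - d ^ 2) :=
  calc G d ≤ ∫ u in Ioi (0 : ℝ), 2 * d / √(1 - d ^ 2) * exp (-u) :=
        setIntegral_mono (integrableOn_div_sqrt_cosh_sq_sub_sq hd0 hd1)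
          ((integrableOn_exp_neg_Ioi 0).const_mul _) (div_sqrt_cosh_sq_sub_sq_le hd0 hd1)
    _ = 2 * d / √(1 - d ^ 2) := by rw [integral_const_mul, integral_exp_neg_Ioi_zero, mul_one]

lemma monotoneOn_G : MonotoneOn G (Ioo 0 1) := by
  intro a ha b hb hab
  refine setIntegral_mono (integrableOn_div_sqrt_cosh_sq_sub_sq ha.1.le ha.2)
    (integrableOn_div_sqrt_cosh_sq_sub_sq hb.1.le hb.2) fun u => ?_
  have hb2 : b ^ 2 < 1 := by nlinarith [hb.1, hb.2]
  exact div_le_div₀ hb.1.le hab (sqrt_pos.2 (sub_pos.2 (sq_lt_cosh_sq hb2 u)))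
    (sqrt_le_sqrt (by nlinarith [ha.1]))

lemma tendsto_G_nhdsGT_zero : Tendsto G (𝓝[>] 0) (𝓝 0) := by
  have hbound : Tendsto (fun d : ℝ => 2 * d / √(1 - d ^ 2)) (𝓝[>] 0) (𝓝 0) := by
    have hc : ContinuousAt (fun d : ℝ => 2 * d / √(1 - d ^ 2)) 0 :=
      (continuous_const.mul continuous_id).continuousAt.div (by fun_prop) (by simp)
    simpa using hc.tendsto.mono_left nhdsWithin_le_nhds
  refine tendsto_of_tendsto_of_tendsto_of_le_of_le' tendsto_const_nhds hbound ?_ ?_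
  · filter_upwards [self_mem_nhdsWithin] with d hd using G_nonneg (le_of_lt hd)
  · filter_upwards [Ioo_mem_nhdsGT one_pos] with d hd using G_le hd.1.le hd.2

lemma sinh_add_pos_of_mem_uIcc {ε a u : ℝ} (hε : 0 < ε) (ha : 0 ≤ a) (hu : u ∈ uIcc 0 a) :
    0 < sinh u + ε := by
  rw [uIcc_of_le ha] at hu
  linarith [sinh_nonneg_iff.2 hu.1]

lemma continuousOn_cosh_div_sinh_add {ε a : ℝ} (hε : 0 < ε) (ha : 0 ≤ a) :
    ContinuousOn (fun u => cosh u / (sinh u + ε)) (uIcc 0 a) :=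
  ContinuousOn.div (by fun_prop) (by fun_prop) fun _ hu =>
    (sinh_add_pos_of_mem_uIcc hε ha hu).ne'

lemma integral_cosh_div_sinh_add {ε a : ℝ} (hε : 0 < ε) (ha : 0 ≤ a) :
    ∫ u in 0..a, cosh u / (sinh u + ε) = log (sinh a + ε) - log ε := by
  rw [intervalIntegral.integral_eq_sub_of_hasDerivAt
    (fun u hu => ((hasDerivAt_sinh u).add_const ε).log (sinh_add_pos_of_mem_uIcc hε ha hu).ne')
    (continuousOn_cosh_div_sinh_add hε ha).intervalIntegrable]
  simp

lemma le_G {d : ℝ} (hd0 : 0 ≤ d) (hd1 : d < 1) :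
    d / cosh 1 * (log (sinh 1 + √(1 - d ^ 2)) - log √(1 - d ^ 2)) ≤ G d := by
  set ε := √(1 - d ^ 2)
  have hε : 0 < ε := sqrt_one_sub_sq_pos hd0 hd1
  have hd2 : d ^ 2 < 1 := by nlinarith
  have hcomp : ∀ u ∈ Icc (0 : ℝ) 1,
      d / cosh 1 * (cosh u / (sinh u + ε)) ≤ d / √(cosh u ^ 2 - d ^ 2) := fun u hu => by
    have hsinh : 0 ≤ sinh u := sinh_nonneg_iff.2 hu.1
    calc d / cosh 1 * (cosh u / (sinh u + ε)) ≤ d / cosh 1 * (cosh 1 / (sinh u + ε)) := by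
          gcongr
          exact cosh_le_cosh.2 (by rw [abs_of_nonneg hu.1, abs_one]; exact hu.2)
      _ = d / (sinh u + ε) := by field_simp [(cosh_pos 1).ne']
      _ ≤ d / √(cosh u ^ 2 - d ^ 2) :=
          div_le_div_of_nonneg_left hd0 (sqrt_pos.2 (sub_pos.2 (sq_lt_cosh_sq hd2 u)))
            (sqrt_cosh_sq_sub_sq_le hd2.le hu.1)
  have hint := integrableOn_div_sqrt_cosh_sq_sub_sq hd0 hd1
  calc d / cosh 1 * (log (sinh 1 + ε) - log ε)
      = ∫ u in 0..1, d / cosh 1 * (cosh u / (sinh u + ε)) := by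
        rw [intervalIntegral.integral_const_mul, integral_cosh_div_sinh_add hε zero_le_one]
    _ ≤ ∫ u in 0..1, d / √(cosh u ^ 2 - d ^ 2) :=
        intervalIntegral.integral_mono_on zero_le_one
          ((continuousOn_cosh_div_sinh_add hε zero_le_one).const_mul _).intervalIntegrable
          ((intervalIntegrable_iff_integrableOn_Ioc_of_le zero_le_one).2
            (hint.mono_set Ioc_subset_Ioi_self))
          hcomp
    _ ≤ G d := by
        rw [intervalIntegral.integral_of_le zero_le_one]
        exact setIntegral_mono_set hint (ae_of_all _ fun u => by positivity)
          (ae_of_all _ Ioc_subset_Ioi_self)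

lemma tendsto_sqrt_one_sub_sq_nhdsLT_one :
    Tendsto (fun d : ℝ => √(1 - d ^ 2)) (𝓝[<] 1) (𝓝[>] 0) := by
  refine tendsto_nhdsWithin_iff.2 ⟨?_, ?_⟩
  · have hc : Continuous fun d : ℝ => √(1 - d ^ 2) := by fun_prop
    simpa using (hc.tendsto 1).mono_left nhdsWithin_le_nhds
  · filter_upwards [Ioo_mem_nhdsLT zero_lt_one] with d hd using sqrt_one_sub_sq_pos hd.1.le hd.2

lemma tendsto_G_nhdsLT_one : Tendsto G (𝓝[<] 1) atTop := by
  have hε := tendsto_sqrt_one_sub_sq_nhdsLT_one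
  have hlog : Tendsto (fun d : ℝ => log (sinh 1 + √(1 - d ^ 2)) - log √(1 - d ^ 2))
      (𝓝[<] 1) atTop := by
    have hnum : Tendsto (fun d : ℝ => log (sinh 1 + √(1 - d ^ 2))) (𝓝[<] 1)
        (𝓝 (log (sinh 1 + 0))) :=
      ((continuous_const.add continuous_id).continuousAt.log (by simp)).tendsto.comp
        (tendsto_nhdsWithin_iff.1 hε).1
    exact (hnum.add_atTop (tendsto_neg_atBot_atTop.comp (tendsto_log_nhdsGT_zero.comp hε))).congr
      fun _ => (sub_eq_add_neg _ _).symm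
  have hcoef : Tendsto (fun d : ℝ => d / cosh 1) (𝓝[<] 1) (𝓝 (1 / cosh 1)) :=
    ((continuous_id.div_const _).tendsto 1).mono_left nhdsWithin_le_nhds
  refine tendsto_atTop_mono' _ ?_ (hcoef.pos_mul_atTop (by positivity) hlog)
  filter_upwards [Ioo_mem_nhdsLT zero_lt_one] with d hd using le_G hd.1.le hd.2

theorem stmt_5 :
    (∀ d : ℝ, 0 < d → d < 1 →
      IntegrableOn (fun u : ℝ => d / Real.sqrt (Real.cosh u ^ 2 - d ^ 2)) (Set.Ioi 0)) ∧
    MonotoneOn G (Set.Ioo (0 : ℝ) 1) ∧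
    Tendsto G (𝓝[>] (0 : ℝ)) (𝓝 0) ∧
    Tendsto G (𝓝[<] (1 : ℝ)) atTop :=
  ⟨fun _ hd0 hd1 => integrableOn_div_sqrt_cosh_sq_sub_sq hd0.le hd1, monotoneOn_G,
    tendsto_G_nhdsGT_zero, tendsto_G_nhdsLT_one⟩
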